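/- arXiv:1908.08101 — 3 statements merged into one kernel-verified Lean document; each statement's English description precedes it below -/
import Mathlib

section
/- Projection-based CUR perturbation bound (Theorem 4.1, first form): Under the stated assumptions, ‖A − C̃ C̃† Ã R̃† R̃‖_F ≤ ‖E_I‖_F · ‖A R†‖_F + ‖E_J‖_F · ‖C† A‖_F + 3‖E‖_F. -/
open Matrix

noncomputable section

variable {𝕂 : Type} [RCLike 𝕂]

/-- The Frobenius norm of a matrix. -/
noncomputable def frobNorm {m n : ℕ} (M : Matrix (Fin m) (Fin n) 𝕂) : ℝ :=
  Real.sqrt (∑ i, ∑ j, ‖M i j‖ ^ 2)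

/-- The `i`-th largest singular value of a matrix (1-indexed), i.e. the `i`-th largest
square root of an eigenvalue of `Mᴴ * M`. -/
noncomputable def sigma {m n : ℕ} (M : Matrix (Fin m) (Fin n) 𝕂) (i : ℕ) : ℝ :=
  ((List.ofFn fun j : Fin n =>
      Real.sqrt ((Matrix.isHermitian_conjTranspose_mul_self M).eigenvalues j)).insertionSort
      (· ≥ ·)).getD (i - 1) 0

/-- The spectral norm: the largest singular value. -/
noncomputable def specNorm {m n : ℕ} (M : Matrix (Fin m) (Fin n) 𝕂) : ℝ := sigma M 1

/-- `P` is the Moore–Penrose pseudoinverse of `M`: the four Penrose conditions. -/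
def IsMPInv {m n : ℕ} (M : Matrix (Fin m) (Fin n) 𝕂) (P : Matrix (Fin n) (Fin m) 𝕂) : Prop :=
  M * P * M = M ∧ P * M * P = P ∧ (M * P)ᴴ = M * P ∧ (P * M)ᴴ = P * M

/-- `Mr` is a truncated SVD of order `r` of `M`, i.e. a best rank-`r` approximation of `M`
(equivalently, a matrix obtained from an SVD of `M` by keeping the `r` largest singular
values and zeroing out the rest). -/
def IsTruncSVD {m n : ℕ} (M Mr : Matrix (Fin m) (Fin n) 𝕂) (r : ℕ) : Prop :=
  Mr.rank ≤ r ∧ ∀ B : Matrix (Fin m) (Fin n) 𝕂, B.rank ≤ r → frobNorm (M - Mr) ≤ frobNorm (M - B)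

/-- `Mt = [M]_τ`: the matrix obtained from an SVD of `M` by setting to zero every singular
value strictly less than `τ` (i.e. keeping exactly the singular values `≥ τ`). -/
def IsThresh {m n : ℕ} (M Mt : Matrix (Fin m) (Fin n) 𝕂) (τ : ℝ) : Prop :=
  IsTruncSVD M Mt (Nat.card {i : Fin (min m n) // τ ≤ sigma M ((i : ℕ) + 1)})

/-- The volume of a matrix: the product of its `min p q` largest singular values. -/
noncomputable def vol {p q : ℕ} (M : Matrix (Fin p) (Fin q) 𝕂) : ℝ :=
  ∏ i ∈ Finset.range (min p q), sigma M (i + 1)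

end

/-!
Write `P = C̃ C̃†` and `Q = R̃† R̃`; both are orthogonal projections, so they contract the
Frobenius norm from either side, and
`A - P Ã Q = (1 - P) A + P A (1 - Q) - P E Q`.
Since `rank C = rank R = rank A`, the columns of `C` span the column space of `A` and the rows
of `R` its row space, so `A = C (C† A) = (A R†) R`. As `P C̃ = C̃` with `C̃ = C + E_J`, we get
`(1 - P) A = -(1 - P) E_J (C† A)`, and symmetrically `A (1 - Q) = -(A R†) E_I (1 - Q)`.
-/

attribute [local instance] Matrix.frobeniusNormedAddCommGroup

section Range

variable {R : Type*} [CommSemiring R] {m n n₀ : Type*} [Fintype n] [Fintype n₀]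

theorem Matrix.range_mulVecLin_submatrix_le (A : Matrix m n R) (c : n₀ → n) :
    LinearMap.range (A.submatrix id c).mulVecLin ≤ LinearMap.range A.mulVecLin := by
  rw [range_mulVecLin, range_mulVecLin]
  exact Submodule.span_mono fun _ ⟨j, hj⟩ => ⟨c j, hj⟩

theorem Matrix.mul_mul_eq_of_range_le [Fintype m] {C : Matrix m n₀ R} {G : Matrix n₀ m R}
    (hC : C * G * C = C) {A : Matrix m n R}
    (hA : LinearMap.range A.mulVecLin ≤ LinearMap.range C.mulVecLin) : C * G * A = A := by
  refine ext_iff_mulVec.2 fun v => ?_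
  obtain ⟨w, hw⟩ := hA ⟨v, rfl⟩
  simp only [mulVecLin_apply] at hw
  rw [← mulVec_mulVec, ← hw, mulVec_mulVec, hC]

end Range

section Rank

variable {K : Type*} [Field K] {m m₀ n n₀ : Type*} [Fintype m] [Fintype m₀] [Fintype n]
  [Fintype n₀]

theorem Matrix.mul_mul_eq_of_rank_submatrix_col_eq {A : Matrix m n K} {c : n₀ → n}
    (hrank : (A.submatrix id c).rank = A.rank) {G : Matrix n₀ m K}
    (hG : A.submatrix id c * G * A.submatrix id c = A.submatrix id c) :
    A.submatrix id c * G * A = A :=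
  mul_mul_eq_of_range_le hG <| le_of_eq <| Eq.symm <|
    Submodule.eq_of_le_of_finrank_le (range_mulVecLin_submatrix_le A c) hrank.ge

theorem Matrix.mul_mul_eq_of_rank_submatrix_row_eq {A : Matrix m n K} {r : m₀ → m}
    (hrank : (A.submatrix r id).rank = A.rank) {G : Matrix n m₀ K}
    (hG : A.submatrix r id * G * A.submatrix r id = A.submatrix r id) :
    A * G * A.submatrix r id = A := by
  have hGt : Aᵀ.submatrix id r * Gᵀ * Aᵀ.submatrix id r = Aᵀ.submatrix id r := by
    simpa [← transpose_submatrix, ← transpose_mul, Matrix.mul_assoc] using congrArg transpose hG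
  have := mul_mul_eq_of_rank_submatrix_col_eq
    (by rw [← transpose_submatrix, rank_transpose, rank_transpose, hrank]) hGt
  simpa [← transpose_submatrix, ← transpose_mul, Matrix.mul_assoc] using congrArg transpose this

end Rank

section Projection

variable {𝕂 : Type*} [RCLike 𝕂] {l m n : Type*} [Fintype l] [Fintype m] [Fintype n]

theorem Matrix.frobenius_norm_sq_eq_re_trace (M : Matrix m n 𝕂) :
    ‖M‖ ^ 2 = RCLike.re (Mᴴ * M).trace := by
  rw [frobenius_norm_def, ← Real.sqrt_eq_rpow, Real.sq_sqrt (by positivity), Finset.sum_comm]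
  simp only [trace, diag_apply, mul_apply, conjTranspose_apply, map_sum, RCLike.star_def,
    RCLike.conj_mul, ← RCLike.ofReal_pow, RCLike.ofReal_re, Real.rpow_two]

variable [DecidableEq m] {P : Matrix m m 𝕂}

theorem IsStarProjection.frobenius_norm_mul_sq_add (hP : IsStarProjection P)
    (X : Matrix m n 𝕂) : ‖P * X‖ ^ 2 + ‖(1 - P) * X‖ ^ 2 = ‖X‖ ^ 2 := by
  have hPH : Pᴴ = P := hP.isSelfAdjoint
  have hPP : P * P = P := hP.isIdempotentElem
  have hgram : (P * X)ᴴ * (P * X) + ((1 - P) * X)ᴴ * ((1 - P) * X) = Xᴴ * X := by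
    simp only [conjTranspose_mul, conjTranspose_sub, hPH, Matrix.mul_assoc,
      ← Matrix.mul_assoc P, Matrix.sub_mul, Matrix.mul_sub, Matrix.one_mul, hPP]
    abel
  simp only [frobenius_norm_sq_eq_re_trace, ← map_add, ← trace_add, hgram]

theorem IsStarProjection.frobenius_norm_mul_le (hP : IsStarProjection P) (X : Matrix m n 𝕂) :
    ‖P * X‖ ≤ ‖X‖ :=
  pow_le_pow_iff_left₀ (norm_nonneg _) (norm_nonneg _) two_ne_zero |>.1 <| by
    nlinarith [hP.frobenius_norm_mul_sq_add X, sq_nonneg ‖(1 - P) * X‖]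

theorem IsStarProjection.frobenius_norm_mul_le' (hP : IsStarProjection P) (X : Matrix n m 𝕂) :
    ‖X * P‖ ≤ ‖X‖ := by
  rw [← frobenius_norm_conjTranspose, conjTranspose_mul, ← frobenius_norm_conjTranspose X,
    show Pᴴ = P from hP.isSelfAdjoint]
  exact hP.frobenius_norm_mul_le Xᴴ

end Projection

section Perturbation

variable {𝕂 : Type*} [RCLike 𝕂] {l m n : Type*} [Fintype l] [Fintype m] [Fintype n]

theorem frobenius_norm_sub_mul_mul_le [DecidableEq m] [DecidableEq n] {P : Matrix m m 𝕂}
    {Q : Matrix n n 𝕂} (hP : IsStarProjection P) (hQ : IsStarProjection Q) (A E : Matrix m n 𝕂) :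
    ‖A - P * (A + E) * Q‖ ≤ ‖(1 - P) * A‖ + ‖A * (1 - Q)‖ + ‖E‖ := by
  have hsplit : A - P * (A + E) * Q = (1 - P) * A + P * (A * (1 - Q)) - P * (E * Q) := by
    simp only [Matrix.mul_add, Matrix.add_mul, Matrix.sub_mul, Matrix.mul_sub, Matrix.one_mul,
      Matrix.mul_one, Matrix.mul_assoc]
    abel
  calc ‖A - P * (A + E) * Q‖
      ≤ ‖(1 - P) * A‖ + ‖P * (A * (1 - Q))‖ + ‖P * (E * Q)‖ := hsplit ▸ norm_sub_le_of_le
        (norm_add_le _ _) le_rfl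
    _ ≤ ‖(1 - P) * A‖ + ‖A * (1 - Q)‖ + ‖E‖ := by
      gcongr
      · exact hP.frobenius_norm_mul_le _
      · exact (hP.frobenius_norm_mul_le _).trans (hQ.frobenius_norm_mul_le' E)

theorem IsStarProjection.frobenius_norm_one_sub_mul_le [DecidableEq m] {P : Matrix m m 𝕂}
    (hP : IsStarProjection P) {C F : Matrix m l 𝕂} (hPC : P * (C + F) = C + F)
    {X : Matrix l n 𝕂} {A : Matrix m n 𝕂} (hA : C * X = A) : ‖(1 - P) * A‖ ≤ ‖F‖ * ‖X‖ := by
  have hC : (1 - P) * C = -((1 - P) * F) := by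
    rw [eq_neg_iff_add_eq_zero, ← Matrix.mul_add, Matrix.sub_mul, Matrix.one_mul, hPC, sub_self]
  rw [← hA, ← Matrix.mul_assoc, hC, Matrix.neg_mul, norm_neg, Matrix.mul_assoc]
  exact (hP.one_sub.frobenius_norm_mul_le _).trans (frobenius_norm_mul F X)

theorem IsStarProjection.frobenius_norm_mul_one_sub_le [DecidableEq n] {Q : Matrix n n 𝕂}
    (hQ : IsStarProjection Q) {R F : Matrix l n 𝕂} (hRQ : (R + F) * Q = R + F)
    {Y : Matrix m l 𝕂} {A : Matrix m n 𝕂} (hA : Y * R = A) : ‖A * (1 - Q)‖ ≤ ‖Y‖ * ‖F‖ := by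
  have hR : R * (1 - Q) = -(F * (1 - Q)) := by
    rw [eq_neg_iff_add_eq_zero, ← Matrix.add_mul, Matrix.mul_sub, Matrix.mul_one, hRQ, sub_self]
  rw [← hA, Matrix.mul_assoc, hR, Matrix.mul_neg, norm_neg, ← Matrix.mul_assoc]
  exact (hQ.one_sub.frobenius_norm_mul_le' _).trans (frobenius_norm_mul Y F)

end Perturbation

theorem frobNorm_eq_norm {𝕂 : Type} [RCLike 𝕂] {m n : ℕ} (M : Matrix (Fin m) (Fin n) 𝕂) :
    frobNorm M = ‖M‖ := by
  rw [frobNorm, frobenius_norm_def, Real.sqrt_eq_rpow]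
  simp only [Real.rpow_two]

section PseudoInverse

variable {𝕂 : Type} [RCLike 𝕂] {m n : ℕ} {M : Matrix (Fin m) (Fin n) 𝕂}
  {G : Matrix (Fin n) (Fin m) 𝕂}

theorem IsMPInv.isStarProjection_mul (h : IsMPInv M G) : IsStarProjection (M * G) :=
  ⟨by rw [IsIdempotentElem, ← Matrix.mul_assoc, h.1], h.2.2.1⟩

theorem IsMPInv.isStarProjection_pinv_mul (h : IsMPInv M G) : IsStarProjection (G * M) :=
  ⟨by rw [IsIdempotentElem, ← Matrix.mul_assoc, h.2.1], h.2.2.2⟩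

end PseudoInverse

theorem projection_cur_perturbation_general {𝕂 : Type} [RCLike 𝕂] {m n k p q : ℕ}
    (A E : Matrix (Fin m) (Fin n) 𝕂)
    (hrankA : A.rank = k)
    (ι : Fin p ↪ Fin m) (κ : Fin q ↪ Fin n)
    (hrankC : (A.submatrix id ⇑κ).rank = k)
    (hrankR : (A.submatrix ⇑ι id).rank = k)
    (Cp : Matrix (Fin q) (Fin m) 𝕂) (hCp : IsMPInv (A.submatrix id ⇑κ) Cp)
    (Rp : Matrix (Fin n) (Fin p) 𝕂) (hRp : IsMPInv (A.submatrix ⇑ι id) Rp)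
    (Ctp : Matrix (Fin q) (Fin m) 𝕂) (hCtp : IsMPInv ((A + E).submatrix id ⇑κ) Ctp)
    (Rtp : Matrix (Fin n) (Fin p) 𝕂) (hRtp : IsMPInv ((A + E).submatrix ⇑ι id) Rtp) :
    frobNorm (A - (A + E).submatrix id ⇑κ * Ctp * (A + E) * Rtp * (A + E).submatrix ⇑ι id) ≤
      frobNorm (E.submatrix ⇑ι id) * frobNorm (A * Rp) +
        frobNorm (E.submatrix id ⇑κ) * frobNorm (Cp * A) + 3 * frobNorm E := by
  have hA_C : A.submatrix id κ * (Cp * A) = A := by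
    rw [← Matrix.mul_assoc, mul_mul_eq_of_rank_submatrix_col_eq (hrankC.trans hrankA.symm) hCp.1]
  have hA_R : A * Rp * A.submatrix ι id = A :=
    mul_mul_eq_of_rank_submatrix_row_eq (hrankR.trans hrankA.symm) hRp.1
  have hCt : (A + E).submatrix id κ = A.submatrix id κ + E.submatrix id κ := rfl
  have hRt : (A + E).submatrix ι id = A.submatrix ι id + E.submatrix ι id := rfl
  have hP := hCtp.isStarProjection_mul
  have hQ := hRtp.isStarProjection_pinv_mul
  have hcol := hP.frobenius_norm_one_sub_mul_le (hCt ▸ hCtp.1) hA_C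
  have hrow := hQ.frobenius_norm_mul_one_sub_le
    (by rw [← hRt, ← Matrix.mul_assoc, hRtp.1]) hA_R
  have hmain := frobenius_norm_sub_mul_mul_le hP hQ A E
  simp only [Matrix.mul_assoc] at hmain ⊢
  simp only [frobNorm_eq_norm]
  linarith [mul_comm ‖A * Rp‖ ‖E.submatrix ι id‖, norm_nonneg E]

/-- Theorem 4.1 (first form): projection-based CUR perturbation bound. -/
theorem projection_cur_perturbation {𝕂 : Type} [RCLike 𝕂] {m n k p q : ℕ}
    (A E : Matrix (Fin m) (Fin n) 𝕂)
    (hrankA : A.rank = k)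
    (ι : Fin p ↪ Fin m) (κ : Fin q ↪ Fin n)
    (hrankC : (A.submatrix id ⇑κ).rank = k)
    (hrankU : (A.submatrix ⇑ι ⇑κ).rank = k)
    (hrankR : (A.submatrix ⇑ι id).rank = k)
    (Cp : Matrix (Fin q) (Fin m) 𝕂) (hCp : IsMPInv (A.submatrix id ⇑κ) Cp)
    (Rp : Matrix (Fin n) (Fin p) 𝕂) (hRp : IsMPInv (A.submatrix ⇑ι id) Rp)
    (Ctp : Matrix (Fin q) (Fin m) 𝕂) (hCtp : IsMPInv ((A + E).submatrix id ⇑κ) Ctp)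
    (Rtp : Matrix (Fin n) (Fin p) 𝕂) (hRtp : IsMPInv ((A + E).submatrix ⇑ι id) Rtp) :
    frobNorm (A - (A + E).submatrix id ⇑κ * Ctp * (A + E) * Rtp * (A + E).submatrix ⇑ι id) ≤
      frobNorm (E.submatrix ⇑ι id) * frobNorm (A * Rp) +
        frobNorm (E.submatrix id ⇑κ) * frobNorm (Cp * A) + 3 * frobNorm E :=
  projection_cur_perturbation_general A E hrankA ι κ hrankC hrankR Cp hCp Rp hRp Ctp hCtp Rtp hRtp
end

section
/- Intermediate thresholded CUR perturbation bound (Proposition 8.2): For any τ ≥ 0, writing w = ‖W_{k,I}†‖_F and v = ‖V_{k,J}†‖_F, one has ‖A − C̃ [Ũ]_τ† R̃‖_F ≤ ‖C [Ũ]_τ†‖_F · ‖E_I‖_F + ‖[Ũ]_τ† R̃‖_F · ‖E_J‖_F + w·v·(2‖E_{I,J}‖_F + ‖[Ũ]_τ − U‖_F + ‖[Ũ]_τ†‖_F · ‖E_{I,J}‖_F²). -/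
open Matrix

/-!
Because `rank R = rank C = k`, the sampled singular-vector blocks `W_{k,I}`, `V_{k,J}` have full
column rank, so `W_{k,I}† W_{k,I} = V_{k,J}† V_{k,J} = 1`, and `A = W Σ Vᴴ` yields the exact
identity `A - C P R = W (W_{k,I}† (U - U P U) V_{k,J}†ᴴ) Vᴴ` for every `P`.

A best rank-`r` approximation `Ũ_τ` of `Ũ` satisfies the first-order conditions
`(Ũ - Ũ_τ) Ũ_τᴴ = 0 = Ũ_τᴴ (Ũ - Ũ_τ)`, so `P = Ũ_τ†` cannot see the discarded part:
`P Ũ = P Ũ_τ` and `Ũ P = Ũ_τ P`. Substituting `U = Ũ - E_{I,J}` gives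
`U - U P U = (U - Ũ_τ) + Ũ_τ P E_{I,J} + E_{I,J} P Ũ_τ - E_{I,J} P E_{I,J}`, whose middle
terms are orthogonal projections of `E_{I,J}`. The terms `C P E_I` and `E_J P R̃` come from
`C̃ = C + E_J`, `R̃ = R + E_I`.
-/

open RCLike

attribute [local instance] Matrix.frobeniusSeminormedAddCommGroup

lemma inner_eq_zero_of_forall_norm_le_norm_sub_smul {𝕂 E : Type*} [RCLike 𝕂]
    [NormedAddCommGroup E] [InnerProductSpace 𝕂 E] {u w : E}
    (h : ∀ t : 𝕂, ‖u‖ ≤ ‖u - t • w‖) : inner 𝕂 u w = 0 := by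
  have hmin : ‖u - 0‖ = ⨅ x : 𝕂 ∙ w, ‖u - x‖ := by
    refine le_antisymm (le_ciInf fun ⟨x, hx⟩ => ?_) ?_
    · obtain ⟨t, rfl⟩ := Submodule.mem_span_singleton.mp hx
      simpa using h t
    · exact ciInf_le ⟨0, by rintro _ ⟨x, rfl⟩; positivity⟩ (0 : 𝕂 ∙ w) |>.trans_eq (by simp)
  simpa using (Submodule.norm_eq_iInf_iff_inner_eq_zero _ (zero_mem _)).mp hmin w
    (Submodule.mem_span_singleton_self w)

namespace Matrix

section

variable {𝕂 : Type*} [RCLike 𝕂] {l m n : Type*} [Fintype l] [Fintype m] [Fintype n]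

omit [Fintype m] [Fintype n] in
noncomputable def frobeniusVec (M : Matrix m n 𝕂) : EuclideanSpace 𝕂 (n × m) :=
  WithLp.toLp 2 M.vec

omit [Fintype m] [Fintype n] in
lemma frobeniusVec_add (X Y : Matrix m n 𝕂) :
    frobeniusVec (X + Y) = frobeniusVec X + frobeniusVec Y := rfl

omit [Fintype m] [Fintype n] in
lemma frobeniusVec_sub (X Y : Matrix m n 𝕂) :
    frobeniusVec (X - Y) = frobeniusVec X - frobeniusVec Y := rfl

omit [Fintype m] [Fintype n] in
lemma frobeniusVec_smul (t : 𝕂) (X : Matrix m n 𝕂) :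
    frobeniusVec (t • X) = t • frobeniusVec X := rfl

lemma norm_frobeniusVec (M : Matrix m n 𝕂) : ‖frobeniusVec M‖ = ‖M‖ := by
  rw [EuclideanSpace.norm_eq, frobenius_norm_def, Real.sqrt_eq_rpow, Fintype.sum_prod_type,
    Finset.sum_comm]
  simp only [frobeniusVec, vec, ← Real.rpow_natCast]
  norm_num

lemma inner_frobeniusVec (X Y : Matrix m n 𝕂) :
    inner 𝕂 (frobeniusVec X) (frobeniusVec Y) = (Xᴴ * Y).trace := by
  rw [frobeniusVec, frobeniusVec, EuclideanSpace.inner_toLp_toLp, dotProduct_comm,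
    star_vec_dotProduct_vec]

lemma frobenius_norm_sq_eq_re_trace_s14 (M : Matrix m n 𝕂) : ‖M‖ ^ 2 = re (Mᴴ * M).trace := by
  rw [← norm_frobeniusVec, ← inner_frobeniusVec, inner_self_eq_norm_sq]

lemma frobenius_norm_mul_of_conjTranspose_mul_self_eq_one [DecidableEq n] {W : Matrix m n 𝕂}
    (hW : Wᴴ * W = 1) (X : Matrix n l 𝕂) : ‖W * X‖ = ‖X‖ := by
  have h : (W * X)ᴴ * (W * X) = Xᴴ * X := by
    rw [conjTranspose_mul, Matrix.mul_assoc, ← Matrix.mul_assoc Wᴴ, hW, Matrix.one_mul]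
  rw [← sq_eq_sq₀ (norm_nonneg _) (norm_nonneg _), frobenius_norm_sq_eq_re_trace_s14,
    frobenius_norm_sq_eq_re_trace_s14, h]

lemma frobenius_norm_mul_conjTranspose_of_conjTranspose_mul_self_eq_one [DecidableEq n]
    {V : Matrix m n 𝕂} (hV : Vᴴ * V = 1) (X : Matrix l n 𝕂) : ‖X * Vᴴ‖ = ‖X‖ := by
  rw [← frobenius_norm_conjTranspose, conjTranspose_mul, conjTranspose_conjTranspose,
    frobenius_norm_mul_of_conjTranspose_mul_self_eq_one hV, frobenius_norm_conjTranspose]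

lemma frobenius_norm_mul_mul_conjTranspose_le [DecidableEq m] {p q : Type*} [Fintype p]
    [Fintype q] {W : Matrix l m 𝕂} {V : Matrix n m 𝕂} (hW : Wᴴ * W = 1) (hV : Vᴴ * V = 1)
    (Wp : Matrix m p 𝕂) (Y : Matrix p q 𝕂) (Vp : Matrix m q 𝕂) :
    ‖W * (Wp * Y * Vpᴴ) * Vᴴ‖ ≤ ‖Wp‖ * ‖Vp‖ * ‖Y‖ := by
  rw [frobenius_norm_mul_conjTranspose_of_conjTranspose_mul_self_eq_one hV,
    frobenius_norm_mul_of_conjTranspose_mul_self_eq_one hW, ← frobenius_norm_conjTranspose Vp,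
    mul_right_comm]
  exact (frobenius_norm_mul _ _).trans (by gcongr; exact frobenius_norm_mul _ _)

lemma frobenius_norm_mul_le_of_isStarProjection_left {Q : Matrix m m 𝕂}
    (hQ : IsStarProjection Q) (X : Matrix m n 𝕂) : ‖Q * X‖ ≤ ‖X‖ := by
  have horth : inner 𝕂 (frobeniusVec (Q * X)) (frobeniusVec (X - Q * X)) = 0 := by
    rw [inner_frobeniusVec, conjTranspose_mul, ← star_eq_conjTranspose Q,
      hQ.isSelfAdjoint.star_eq, Matrix.mul_sub, Matrix.mul_assoc, Matrix.mul_assoc,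
      ← Matrix.mul_assoc Q Q X, hQ.isIdempotentElem.eq, sub_self, trace_zero]
  have hpyth := norm_add_sq_eq_norm_sq_add_norm_sq_of_inner_eq_zero _ _ horth
  rw [← frobeniusVec_add, add_sub_cancel, norm_frobeniusVec, norm_frobeniusVec] at hpyth
  nlinarith [norm_nonneg (Q * X), norm_nonneg X, sq_nonneg ‖frobeniusVec (X - Q * X)‖]

lemma frobenius_norm_mul_le_of_isStarProjection_right {Q : Matrix n n 𝕂}
    (hQ : IsStarProjection Q) (X : Matrix m n 𝕂) : ‖X * Q‖ ≤ ‖X‖ := by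
  rw [← frobenius_norm_conjTranspose, ← frobenius_norm_conjTranspose X, conjTranspose_mul,
    ← star_eq_conjTranspose Q, hQ.isSelfAdjoint.star_eq]
  exact frobenius_norm_mul_le_of_isStarProjection_left hQ Xᴴ

omit [Fintype m] in
lemma eq_zero_of_mul_eq_zero_of_rank_eq_card {K : Type*} [Field K] [DecidableEq l]
    {M : Matrix m n K} (hM : M.rank = Fintype.card n) {N : Matrix n l K} (hMN : M * N = 0) :
    N = 0 := by
  have hker : LinearMap.ker M.mulVecLin = ⊥ := by
    have := LinearMap.finrank_range_add_finrank_ker M.mulVecLin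
    rw [Module.finrank_fintype_fun_eq_card, ← rank, hM, add_eq_left] at this
    exact Submodule.finrank_eq_zero.mp this
  have hN : N.mulVecLin = 0 := LinearMap.ext fun v => by
    apply LinearMap.ker_eq_bot.mp hker
    simpa [← mulVecLin_mul] using congrArg (fun T => T.mulVecLin v) hMN
  exact Matrix.toLin'.injective (by rw [Matrix.toLin'_apply', hN, map_zero])

omit [Fintype m] in
lemma rank_eq_card_of_rank_mul_eq_card {K : Type*} [Field K] {X : Matrix m n K}
    (Y : Matrix n l K) (h : (X * Y).rank = Fintype.card n) : X.rank = Fintype.card n :=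
  le_antisymm (rank_le_card_width X) (h ▸ rank_mul_le_left X Y)

end

section

variable {R : Type*} [CommRing R] [StarRing R] {m n k p q : Type*} [Fintype k]

lemma submatrix_mul_mul_conjTranspose (W : Matrix m k R) (S : Matrix k k R)
    (V : Matrix n k R) (ι : p → m) (κ : q → n) :
    (W * S * Vᴴ).submatrix ι κ = W.submatrix ι id * S * (V.submatrix κ id)ᴴ := by
  rw [submatrix_mul _ _ ι id κ Function.bijective_id,
    submatrix_mul _ _ ι id id Function.bijective_id, submatrix_id_id, conjTranspose_submatrix]

lemma sub_submatrix_mul_mul_submatrix_eq [Fintype p] [Fintype q] [DecidableEq k]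
    {A : Matrix m n R} {W : Matrix m k R} {S : Matrix k k R} {V : Matrix n k R}
    (hA : A = W * S * Vᴴ) {ι : p → m} {κ : q → n} {Wp : Matrix k p R} {Vp : Matrix k q R}
    (hW : Wp * W.submatrix ι id = 1) (hV : Vp * V.submatrix κ id = 1) (P : Matrix q p R) :
    A - A.submatrix id κ * P * A.submatrix ι id =
      W * (Wp * (A.submatrix ι κ - A.submatrix ι κ * P * A.submatrix ι κ) * Vpᴴ) * Vᴴ := by
  have hW' (X : Matrix k n R) : Wp * (W.submatrix ι id * X) = X := by
    rw [← Matrix.mul_assoc, hW, Matrix.one_mul]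
  have hV' (X : Matrix k n R) : (V.submatrix κ id)ᴴ * (Vpᴴ * X) = X := by
    rw [← Matrix.mul_assoc, ← conjTranspose_mul, hV, conjTranspose_one, Matrix.one_mul]
  subst hA
  simp only [submatrix_mul_mul_conjTranspose, submatrix_id_id]
  simp only [Matrix.mul_sub, Matrix.sub_mul, Matrix.mul_assoc, hW', hV']

end

section

variable {𝕂 : Type*} [RCLike 𝕂] {m n k p q : Type*} [Fintype k]

open scoped ComplexOrder

lemma rank_submatrix_rows_eq_card [Fintype n] {A : Matrix m n 𝕂} {W : Matrix m k 𝕂}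
    {S : Matrix k k 𝕂} {V : Matrix n k 𝕂} (hA : A = W * S * Vᴴ) {ι : p → m}
    (h : (A.submatrix ι id).rank = Fintype.card k) : (W.submatrix ι id).rank = Fintype.card k := by
  rw [hA, submatrix_mul_mul_conjTranspose, submatrix_id_id, Matrix.mul_assoc] at h
  exact rank_eq_card_of_rank_mul_eq_card _ h

lemma rank_submatrix_cols_eq_card [Fintype m] [Fintype q] {A : Matrix m n 𝕂} {W : Matrix m k 𝕂}
    {S : Matrix k k 𝕂} {V : Matrix n k 𝕂} (hA : A = W * S * Vᴴ) {κ : q → n}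
    (h : (A.submatrix id κ).rank = Fintype.card k) : (V.submatrix κ id).rank = Fintype.card k := by
  rw [hA, submatrix_mul_mul_conjTranspose, submatrix_id_id, ← rank_conjTranspose,
    conjTranspose_mul, conjTranspose_conjTranspose] at h
  exact rank_eq_card_of_rank_mul_eq_card _ h

end

end Matrix

section

variable {𝕂 : Type} [RCLike 𝕂] {a b r : ℕ} {P : Matrix (Fin b) (Fin a) 𝕂}

lemma frobNorm_eq_norm_s14 (M : Matrix (Fin a) (Fin b) 𝕂) : frobNorm M = ‖M‖ := by
  simp only [frobNorm, frobenius_norm_def, Real.sqrt_eq_rpow, ← Real.rpow_natCast]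
  norm_num

namespace IsMPInv

variable {M : Matrix (Fin a) (Fin b) 𝕂} {l : Type*}

lemma mul_eq_zero_of_conjTranspose_mul_eq_zero (h : IsMPInv M P) {D : Matrix (Fin a) l 𝕂}
    (hD : Mᴴ * D = 0) : P * D = 0 := by
  rw [← h.2.1, Matrix.mul_assoc P M P, ← h.2.2.1, conjTranspose_mul, Matrix.mul_assoc,
    Matrix.mul_assoc, hD, Matrix.mul_zero, Matrix.mul_zero]

lemma mul_eq_zero_of_mul_conjTranspose_eq_zero (h : IsMPInv M P) {D : Matrix l (Fin b) 𝕂}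
    (hD : D * Mᴴ = 0) : D * P = 0 := by
  rw [← h.2.1, ← h.2.2.2, conjTranspose_mul, ← Matrix.mul_assoc, ← Matrix.mul_assoc, hD,
    Matrix.zero_mul, Matrix.zero_mul]

lemma mul_eq_one_of_rank_eq (h : IsMPInv M P) (hM : M.rank = b) : P * M = 1 := by
  refine sub_eq_zero.mp (eq_zero_of_mul_eq_zero_of_rank_eq_card (by simpa using hM) ?_)
  rw [Matrix.mul_sub, ← Matrix.mul_assoc, h.1, Matrix.mul_one, sub_self]

lemma isStarProjection_mul_pinv (h : IsMPInv M P) : IsStarProjection (M * P) :=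
  ⟨by rw [IsIdempotentElem, ← Matrix.mul_assoc, h.1], h.2.2.1⟩

lemma isStarProjection_pinv_mul_s14 (h : IsMPInv M P) : IsStarProjection (P * M) :=
  ⟨by rw [IsIdempotentElem, ← Matrix.mul_assoc, h.2.1], h.2.2.2⟩

end IsMPInv

namespace IsTruncSVD

open scoped ComplexOrder

variable {M Mr : Matrix (Fin a) (Fin b) 𝕂}

lemma trace_conjTranspose_sub_mul_eq_zero (h : IsTruncSVD M Mr r) {X : Matrix (Fin a) (Fin b) 𝕂}
    (hX : ∀ t : 𝕂, (Mr + t • X).rank ≤ r) : ((M - Mr)ᴴ * X).trace = 0 := by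
  rw [← inner_frobeniusVec]
  refine inner_eq_zero_of_forall_norm_le_norm_sub_smul fun t => ?_
  rw [← frobeniusVec_smul, ← frobeniusVec_sub, norm_frobeniusVec, norm_frobeniusVec,
    ← frobNorm_eq_norm_s14, ← frobNorm_eq_norm_s14, sub_sub]
  exact h.2 _ (hX t)

lemma sub_mul_conjTranspose_eq_zero (h : IsTruncSVD M Mr r) : (M - Mr) * Mrᴴ = 0 := by
  set D := (M - Mr) * Mrᴴ
  -- `(1 + t D) Mr` has rank `≤ r`, and optimality in the direction `D Mr` says `tr (Dᴴ D) = 0`.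
  have htr := h.trace_conjTranspose_sub_mul_eq_zero (X := D * Mr) fun t => by
    rw [show Mr + t • (D * Mr) = (1 + t • D) * Mr by
      rw [Matrix.add_mul, Matrix.one_mul, Matrix.smul_mul]]
    exact (rank_mul_le_right _ _).trans h.1
  rwa [← Matrix.mul_assoc, trace_mul_comm, ← Matrix.mul_assoc,
    show Mr * (M - Mr)ᴴ = Dᴴ by rw [conjTranspose_mul, conjTranspose_conjTranspose],
    trace_conjTranspose_mul_self_eq_zero_iff] at htr

lemma conjTranspose_mul_sub_eq_zero (h : IsTruncSVD M Mr r) : Mrᴴ * (M - Mr) = 0 := by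
  set D := Mrᴴ * (M - Mr)
  have htr := h.trace_conjTranspose_sub_mul_eq_zero (X := Mr * D) fun t => by
    rw [show Mr + t • (Mr * D) = Mr * (1 + t • D) by
      rw [Matrix.mul_add, Matrix.mul_one, Matrix.mul_smul]]
    exact (rank_mul_le_left _ _).trans h.1
  rwa [← Matrix.mul_assoc, show (M - Mr)ᴴ * Mr = Dᴴ by
      rw [conjTranspose_mul, conjTranspose_conjTranspose],
    trace_conjTranspose_mul_self_eq_zero_iff] at htr

lemma pinv_mul_eq (h : IsTruncSVD M Mr r) (hP : IsMPInv Mr P) : P * M = P * Mr := by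
  rw [← sub_eq_zero, ← Matrix.mul_sub]
  exact hP.mul_eq_zero_of_conjTranspose_mul_eq_zero h.conjTranspose_mul_sub_eq_zero

lemma mul_pinv_eq (h : IsTruncSVD M Mr r) (hP : IsMPInv Mr P) : M * P = Mr * P := by
  rw [← sub_eq_zero, ← Matrix.sub_mul]
  exact hP.mul_eq_zero_of_mul_conjTranspose_eq_zero h.sub_mul_conjTranspose_eq_zero

end IsTruncSVD

variable {U E Ut : Matrix (Fin a) (Fin b) 𝕂}

lemma sub_mul_pinv_mul_eq (hUt : Ut * P * Ut = Ut) (hl : P * (U + E) = P * Ut)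
    (hr : (U + E) * P = Ut * P) :
    U - U * P * U = U - Ut + Ut * P * E + E * P * Ut - E * P * E := by
  have hPU : P * U = P * Ut - P * E := by rw [← hl, Matrix.mul_add, add_sub_cancel_right]
  have hUP : U * P = Ut * P - E * P := by rw [← hr, Matrix.add_mul, add_sub_cancel_right]
  rw [hUP, Matrix.sub_mul, Matrix.mul_assoc, Matrix.mul_assoc, hPU]
  simp only [Matrix.mul_sub, ← Matrix.mul_assoc, hUt]
  abel

lemma IsTruncSVD.frobenius_norm_sub_mul_pinv_mul_le (h : IsTruncSVD (U + E) Ut r)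
    (hP : IsMPInv Ut P) : ‖U - U * P * U‖ ≤ 2 * ‖E‖ + ‖Ut - U‖ + ‖P‖ * ‖E‖ ^ 2 := by
  rw [sub_mul_pinv_mul_eq hP.1 (h.pinv_mul_eq hP) (h.mul_pinv_eq hP)]
  have hUtP : ‖Ut * P * E‖ ≤ ‖E‖ :=
    frobenius_norm_mul_le_of_isStarProjection_left hP.isStarProjection_mul_pinv E
  have hPUt : ‖E * P * Ut‖ ≤ ‖E‖ := by
    rw [Matrix.mul_assoc]
    exact frobenius_norm_mul_le_of_isStarProjection_right hP.isStarProjection_pinv_mul_s14 E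
  have hEPE : ‖E * P * E‖ ≤ ‖P‖ * ‖E‖ ^ 2 :=
    calc ‖E * P * E‖ ≤ ‖E‖ * ‖P‖ * ‖E‖ :=
          (frobenius_norm_mul _ _).trans (by gcongr; exact frobenius_norm_mul _ _)
      _ = ‖P‖ * ‖E‖ ^ 2 := by ring
  calc ‖U - Ut + Ut * P * E + E * P * Ut - E * P * E‖
      ≤ ‖U - Ut‖ + ‖Ut * P * E‖ + ‖E * P * Ut‖ + ‖E * P * E‖ :=
        (norm_sub_le _ _).trans (by gcongr; exact norm_add₃_le)
    _ ≤ 2 * ‖E‖ + ‖Ut - U‖ + ‖P‖ * ‖E‖ ^ 2 := by rw [norm_sub_rev]; linarith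

end

theorem thresholded_cur_intermediate_general {𝕂 : Type} [RCLike 𝕂] {m n k p q : ℕ}
    (A E : Matrix (Fin m) (Fin n) 𝕂)
    (ι : Fin p ↪ Fin m) (κ : Fin q ↪ Fin n)
    (hrankC : (A.submatrix id ⇑κ).rank = k)
    (hrankR : (A.submatrix ⇑ι id).rank = k)
    (W : Matrix (Fin m) (Fin k) 𝕂) (V : Matrix (Fin n) (Fin k) 𝕂) (d : Fin k → ℝ)
    (hW : Wᴴ * W = 1) (hV : Vᴴ * V = 1)
    (hSVD : A = W * Matrix.diagonal (fun i => (d i : 𝕂)) * Vᴴ)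
    (Wp : Matrix (Fin k) (Fin p) 𝕂) (hWp : IsMPInv (W.submatrix ⇑ι id) Wp)
    (Vp : Matrix (Fin k) (Fin q) 𝕂) (hVp : IsMPInv (V.submatrix ⇑κ id) Vp)
    (τ : ℝ)
    (Ut : Matrix (Fin p) (Fin q) 𝕂) (hUt : IsThresh ((A + E).submatrix ⇑ι ⇑κ) Ut τ)
    (Utp : Matrix (Fin q) (Fin p) 𝕂) (hUtp : IsMPInv Ut Utp) :
    frobNorm (A - (A + E).submatrix id ⇑κ * Utp * (A + E).submatrix ⇑ι id) ≤
      frobNorm (A.submatrix id ⇑κ * Utp) * frobNorm (E.submatrix ⇑ι id) +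
        frobNorm (Utp * (A + E).submatrix ⇑ι id) * frobNorm (E.submatrix id ⇑κ) +
        frobNorm Wp * frobNorm Vp *
          (2 * frobNorm (E.submatrix ⇑ι ⇑κ) + frobNorm (Ut - A.submatrix ⇑ι ⇑κ) +
            frobNorm Utp * frobNorm (E.submatrix ⇑ι ⇑κ) ^ 2) := by
  have hWI : Wp * W.submatrix ι id = 1 := hWp.mul_eq_one_of_rank_eq <| by
    simpa using rank_submatrix_rows_eq_card hSVD (by simpa using hrankR)
  have hVJ : Vp * V.submatrix κ id = 1 := hVp.mul_eq_one_of_rank_eq <| by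
    simpa using rank_submatrix_cols_eq_card hSVD (by simpa using hrankC)
  have hsum {a b : ℕ} (r : Fin a → Fin m) (c : Fin b → Fin n) :
      (A + E).submatrix r c = A.submatrix r c + E.submatrix r c := rfl
  set U := A.submatrix ι κ
  set Y := U - U * Utp * U
  have hres : A - (A + E).submatrix id κ * Utp * (A + E).submatrix ι id =
      W * (Wp * Y * Vpᴴ) * Vᴴ - A.submatrix id κ * Utp * E.submatrix ι id -
        E.submatrix id κ * (Utp * (A + E).submatrix ι id) := by
    rw [← sub_submatrix_mul_mul_submatrix_eq hSVD hWI hVJ, hsum, hsum]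
    simp only [Matrix.add_mul, Matrix.mul_add, Matrix.mul_assoc]
    abel
  have hY : ‖Y‖ ≤ _ := (hsum ι κ ▸ hUt).frobenius_norm_sub_mul_pinv_mul_le hUtp
  have hcore := frobenius_norm_mul_mul_conjTranspose_le hW hV Wp Y Vp
  have hC := frobenius_norm_mul (A.submatrix id κ * Utp) (E.submatrix ι id)
  have hR := frobenius_norm_mul (E.submatrix id κ) (Utp * (A + E).submatrix ι id)
  have hWV := mul_le_mul_of_nonneg_left hY (by positivity : 0 ≤ ‖Wp‖ * ‖Vp‖)
  simp only [frobNorm_eq_norm_s14, hres]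
  refine (norm_sub_le _ _).trans ?_
  linarith [norm_sub_le (W * (Wp * Y * Vpᴴ) * Vᴴ) (A.submatrix id κ * Utp * E.submatrix ι id)]

/-- Proposition 8.2: intermediate thresholded CUR perturbation bound. -/
theorem thresholded_cur_intermediate {𝕂 : Type} [RCLike 𝕂] {m n k p q : ℕ}
    (A E : Matrix (Fin m) (Fin n) 𝕂)
    (hrankA : A.rank = k)
    (ι : Fin p ↪ Fin m) (κ : Fin q ↪ Fin n)
    (hrankC : (A.submatrix id ⇑κ).rank = k)
    (hrankU : (A.submatrix ⇑ι ⇑κ).rank = k)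
    (hrankR : (A.submatrix ⇑ι id).rank = k)
    (W : Matrix (Fin m) (Fin k) 𝕂) (V : Matrix (Fin n) (Fin k) 𝕂) (d : Fin k → ℝ)
    (hW : Wᴴ * W = 1) (hV : Vᴴ * V = 1)
    (hmono : ∀ i j : Fin k, i ≤ j → d j ≤ d i) (hpos : ∀ i, 0 < d i)
    (hSVD : A = W * Matrix.diagonal (fun i => (d i : 𝕂)) * Vᴴ)
    (Wp : Matrix (Fin k) (Fin p) 𝕂) (hWp : IsMPInv (W.submatrix ⇑ι id) Wp)
    (Vp : Matrix (Fin k) (Fin q) 𝕂) (hVp : IsMPInv (V.submatrix ⇑κ id) Vp)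
    (τ : ℝ) (hτ : 0 ≤ τ)
    (Ut : Matrix (Fin p) (Fin q) 𝕂) (hUt : IsThresh ((A + E).submatrix ⇑ι ⇑κ) Ut τ)
    (Utp : Matrix (Fin q) (Fin p) 𝕂) (hUtp : IsMPInv Ut Utp) :
    frobNorm (A - (A + E).submatrix id ⇑κ * Utp * (A + E).submatrix ⇑ι id) ≤
      frobNorm (A.submatrix id ⇑κ * Utp) * frobNorm (E.submatrix ⇑ι id) +
        frobNorm (Utp * (A + E).submatrix ⇑ι id) * frobNorm (E.submatrix id ⇑κ) +
        frobNorm Wp * frobNorm Vp *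
          (2 * frobNorm (E.submatrix ⇑ι ⇑κ) + frobNorm (Ut - A.submatrix ⇑ι ⇑κ) +
            frobNorm Utp * frobNorm (E.submatrix ⇑ι ⇑κ) ^ 2) :=
  thresholded_cur_intermediate_general A E ι κ hrankC hrankR W V d hW hV hSVD Wp hWp Vp hVp τ Ut hUt
    Utp hUtp
end

section
/- Truncating after forming the CUR approximation can be strictly worse than truncating the middle matrix (Section 9 counterexample): Let A = [[-1, 0, 10], [0, 2, 0], [10, 0, 100]] ∈ ℝ^{3×3}, C = A(:, {1,2}) (first two columns), R = A({1,2}, :) (first two rows), and U = A({1,2},{1,2}) = [[-1, 0], [0, 2]]. Let U_1 denote the best rank-1 approximation of U and (C U† R)_1 the best rank-1 approximation of C U† R. Then ‖A − C U_1† R‖₂ < ‖A − (C U† R)_1‖₂ and ‖A − C U_1† R‖_F < ‖A − (C U† R)_1‖_F; concretely, ‖A − C U_1† R‖_F = 101 while ‖A − (C U† R)_1‖_F = √40004, and ‖A − C U_1† R‖₂ ≤ 101 while ‖A − (C U† R)_1‖₂ = 200. -/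
open Matrix

/-!
Since `U = diag(-1, 2)` is invertible, `U† = U⁻¹` and
`C U† R = [[-1, 0, 10], [0, 2, 0], [10, 0, -100]]`: the rank-one matrix `-(1, 0, -10)ᵀ (1, 0, -10)`
of norm 101 plus a lone entry 2. Its best rank-one approximation keeps the former, so
`A - (C U† R)₁ = diag(0, 2, 200)`. Truncating `U` instead keeps the entry 2 and discards the -1,
so `U₁† = diag(0, 1/2)` and `A - C U₁† R = [[-1, 0, 10], [0, 0, 0], [10, 0, 100]]`, of Frobenius
norm 101, which also bounds its spectral norm.

Both best rank-one approximations are identified through Eckart–Young for a `2 × 2` diagonal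
matrix, using only that a matrix of rank at most one has vanishing `2 × 2` minors.
-/

section

variable {𝕂 : Type} [RCLike 𝕂] {m n : ℕ}

theorem IsMPInv.eq {M : Matrix (Fin m) (Fin n) 𝕂} {P Q : Matrix (Fin n) (Fin m) 𝕂}
    (hP : IsMPInv M P) (hQ : IsMPInv M Q) : P = Q := by
  obtain ⟨hMPM, hPMP, hMP, hPM⟩ := hP
  obtain ⟨hMQM, hQMQ, hMQ, hQM⟩ := hQ
  have hP_eq : P = P * M * Q := calc
    P = P * (M * P)ᴴ := by rw [hMP, ← Matrix.mul_assoc, hPMP]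
    _ = P * Pᴴ * (M * Q * M)ᴴ := by simp only [hMQM, conjTranspose_mul, Matrix.mul_assoc]
    _ = P * (M * P)ᴴ * (M * Q)ᴴ := by simp only [conjTranspose_mul, Matrix.mul_assoc]
    _ = P * M * Q := by rw [hMP, hMQ]; simp only [← Matrix.mul_assoc, hPMP]
  have hQ_eq : Q = P * M * Q := calc
    Q = (Q * M)ᴴ * Q := by rw [hQM, hQMQ]
    _ = (M * P * M)ᴴ * Qᴴ * Q := by simp only [hMPM, conjTranspose_mul, Matrix.mul_assoc]
    _ = (P * M)ᴴ * (Q * M)ᴴ * Q := by simp only [conjTranspose_mul, Matrix.mul_assoc]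
    _ = P * M * Q := by rw [hPM, hQM, Matrix.mul_assoc, hQMQ]
  rw [hP_eq, ← hQ_eq]

-- The convention `0⁻¹ = 0` makes this the pseudoinverse of every diagonal matrix, singular or not.
theorem isMPInv_diagonal (d : Fin n → 𝕂) : IsMPInv (diagonal d) (diagonal fun i => (d i)⁻¹) := by
  refine ⟨?_, ?_, ?_, ?_⟩ <;> simp only [diagonal_mul_diagonal, diagonal_conjTranspose] <;>
    congr 1 <;> funext i <;> rcases eq_or_ne (d i) 0 with h | h <;> simp [h]

theorem IsMPInv.eq_diagonal_inv {d : Fin n → 𝕂} {P : Matrix (Fin n) (Fin n) 𝕂}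
    (h : IsMPInv (diagonal d) P) : P = diagonal fun i => (d i)⁻¹ :=
  h.eq (isMPInv_diagonal d)

theorem frobNorm_le_frobNorm_iff {M N : Matrix (Fin m) (Fin n) 𝕂} :
    frobNorm M ≤ frobNorm N ↔ ∑ i, ∑ j, ‖M i j‖ ^ 2 ≤ ∑ i, ∑ j, ‖N i j‖ ^ 2 :=
  Real.sqrt_le_sqrt_iff (by positivity)

theorem sum_eigenvalues_conjTranspose_mul_self (M : Matrix (Fin m) (Fin n) 𝕂) :
    ∑ j, (isHermitian_conjTranspose_mul_self M).eigenvalues j = ∑ i, ∑ j, ‖M i j‖ ^ 2 := by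
  apply RCLike.ofReal_injective (K := 𝕂)
  rw [RCLike.ofReal_sum, ← (isHermitian_conjTranspose_mul_self M).trace_eq_sum_eigenvalues,
    Finset.sum_comm]
  simp [trace, mul_apply, RCLike.conj_mul]

theorem getD_zero_insertionSort_ge_le {L : List ℝ} {a : ℝ} (ha : 0 ≤ a) (h : ∀ x ∈ L, x ≤ a) :
    (L.insertionSort (· ≥ ·)).getD 0 0 ≤ a := by
  rcases hS : L.insertionSort (· ≥ ·) with _ | ⟨b, t⟩
  · exact ha
  · exact h b ((List.mem_insertionSort _).mp (hS ▸ List.mem_cons_self))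

theorem getD_zero_insertionSort_ge_eq {L : List ℝ} {a : ℝ} (hmem : a ∈ L) (h : ∀ x ∈ L, x ≤ a) :
    (L.insertionSort (· ≥ ·)).getD 0 0 = a := by
  have hsorted := List.pairwise_insertionSort (· ≥ ·) L
  have ha : a ∈ L.insertionSort (· ≥ ·) := (List.mem_insertionSort _).mpr hmem
  rcases hS : L.insertionSort (· ≥ ·) with _ | ⟨b, t⟩
  · simp [hS] at ha
  · rw [hS] at hsorted ha
    refine le_antisymm (h b ((List.mem_insertionSort _).mp (hS ▸ List.mem_cons_self))) ?_
    rcases List.mem_cons.mp ha with rfl | hat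
    · exact le_rfl
    · exact List.rel_of_pairwise_cons hsorted hat

section specNorm

variable {M : Matrix (Fin m) (Fin n) 𝕂} {s : ℝ}

theorem specNorm_le (hs : 0 ≤ s)
    (h : ∀ j, (isHermitian_conjTranspose_mul_self M).eigenvalues j ≤ s ^ 2) :
    specNorm M ≤ s := by
  refine getD_zero_insertionSort_ge_le hs fun x hx => ?_
  obtain ⟨j, rfl⟩ := List.mem_ofFn.mp hx
  exact (Real.sqrt_le_left hs).mpr (h j)

theorem specNorm_eq (hs : 0 ≤ s)
    (h : ∀ j, (isHermitian_conjTranspose_mul_self M).eigenvalues j ≤ s ^ 2) (j : Fin n)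
    (hj : (isHermitian_conjTranspose_mul_self M).eigenvalues j = s ^ 2) :
    specNorm M = s := by
  refine getD_zero_insertionSort_ge_eq (List.mem_ofFn.mpr ⟨j, ?_⟩) fun x hx => ?_
  · simp [hj, Real.sqrt_sq hs]
  · obtain ⟨j, rfl⟩ := List.mem_ofFn.mp hx
    exact (Real.sqrt_le_left hs).mpr (h j)

end specNorm

theorem specNorm_le_frobNorm (M : Matrix (Fin m) (Fin n) 𝕂) : specNorm M ≤ frobNorm M := by
  refine specNorm_le (Real.sqrt_nonneg _) fun j => ?_
  rw [frobNorm, Real.sq_sqrt (by positivity), ← sum_eigenvalues_conjTranspose_mul_self]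
  exact Finset.single_le_sum (fun i _ => eigenvalues_conjTranspose_mul_self_nonneg M i)
    (Finset.mem_univ j)

end

theorem specNorm_diagonal {n : ℕ} (d : Fin n → ℝ) (i : Fin n) (h : ∀ j, |d j| ≤ |d i|) :
    specNorm (diagonal d) = |d i| := by
  have hrange : Set.range (isHermitian_conjTranspose_mul_self (diagonal d)).eigenvalues =
      Set.range fun j => d j ^ 2 := by
    rw [← IsHermitian.spectrum_real_eq_range_eigenvalues, diagonal_conjTranspose,
      diagonal_mul_diagonal, ← spectrum_diagonal]
    simp [sq]
  have hle : ∀ j, |d j| ^ 2 ≤ |d i| ^ 2 := fun j => pow_le_pow_left₀ (abs_nonneg _) (h j) 2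
  obtain ⟨j, hj⟩ : d i ^ 2 ∈ Set.range _ := hrange.symm ▸ Set.mem_range_self i
  refine specNorm_eq (abs_nonneg _) (fun k => ?_) j (by rw [hj, sq_abs])
  obtain ⟨l, hl⟩ : _ ∈ Set.range fun j => d j ^ 2 := hrange ▸ Set.mem_range_self k
  rw [← hl]
  simpa [sq_abs] using hle l

theorem Matrix.mul_eq_mul_of_rank_le_one {K ι κ : Type*} [Field K] [Fintype κ]
    {X : Matrix ι κ K} (hX : X.rank ≤ 1) (i j : ι) (k l : κ) :
    X i k * X j l = X i l * X j k := by
  have hminor : (X.submatrix ![i, j] ![k, l]).rank ≤ 1 := (X.rank_submatrix_le _ _).trans hX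
  by_contra hne
  have hunit : IsUnit (X.submatrix ![i, j] ![k, l]) := by
    rw [isUnit_iff_isUnit_det, isUnit_iff_ne_zero, det_fin_two]
    simpa [sub_eq_zero] using hne
  rw [rank_of_isUnit _ hunit] at hminor
  simp at hminor

/-- Eckart–Young for `diag(a, b)` with `|a| < |b|`: the only matrix `[[x, p], [q, y]]` of rank at
most one within Frobenius distance `|a|` is `diag(0, b)`. With `s = |x|`, `t = |y|` and
`p² + q² ≥ 2 |p q| = 2 s t`, the hypothesis gives `(s + t - |b|)² + 2 (|b| - |a|) s ≤ 0`. -/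
theorem eq_of_mul_eq_mul_of_dist_sq_le {a b x y p q : ℝ} (hab : |a| < |b|) (hxy : x * y = p * q)
    (h : (a - x) ^ 2 + p ^ 2 + q ^ 2 + (b - y) ^ 2 ≤ a ^ 2) :
    x = 0 ∧ p = 0 ∧ q = 0 ∧ y = b := by
  have hpq : 2 * (|x| * |y|) ≤ p ^ 2 + q ^ 2 := by
    rw [← abs_mul, hxy, abs_mul, ← sq_abs p, ← sq_abs q]
    nlinarith [two_mul_le_add_sq |p| |q|]
  have hax : (|a| - |x|) ^ 2 ≤ (a - x) ^ 2 :=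
    sq_le_sq.mpr (by simpa using abs_abs_sub_abs_le_abs_sub a x)
  have hby : (|b| - |y|) ^ 2 ≤ (b - y) ^ 2 :=
    sq_le_sq.mpr (by simpa using abs_abs_sub_abs_le_abs_sub b y)
  have hkey : (|x| + |y| - |b|) ^ 2 + 2 * (|b| - |a|) * |x| ≤ 0 := by
    nlinarith [sq_abs a]
  obtain rfl : x = 0 :=
    abs_nonpos_iff.mp (by nlinarith [sq_nonneg (|x| + |y| - |b|), abs_nonneg x])
  obtain ⟨hp, hq, hy⟩ : p ^ 2 = 0 ∧ q ^ 2 = 0 ∧ (b - y) ^ 2 = 0 := by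
    refine ⟨?_, ?_, ?_⟩ <;> nlinarith [sq_nonneg p, sq_nonneg q, sq_nonneg (b - y)]
  simp only [sq_eq_zero_iff, sub_eq_zero] at hp hq hy
  exact ⟨rfl, hp, hq, hy.symm⟩

theorem IsTruncSVD.eq_diagonal_two {a b : ℝ} (hab : |a| < |b|) {X : Matrix (Fin 2) (Fin 2) ℝ}
    (hX : IsTruncSVD (diagonal ![a, b]) X 1) : X = diagonal ![0, b] := by
  have hrank : (diagonal ![0, b]).rank ≤ 1 := by
    have : diagonal ![0, b] = vecMulVec ![0, 1] ![0, b] := by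
      ext i j; fin_cases i <;> fin_cases j <;> norm_num [vecMulVec_apply]
    exact this ▸ rank_vecMulVec_le _ _
  have hdist := frobNorm_le_frobNorm_iff.mp (hX.2 _ hrank)
  simp [Fin.sum_univ_two, sq_abs] at hdist
  obtain ⟨h00, h01, h10, h11⟩ := eq_of_mul_eq_mul_of_dist_sq_le hab
    (mul_eq_mul_of_rank_le_one hX.1 0 1 0 1) (by linarith)
  ext i j; fin_cases i <;> fin_cases j <;> simp [*]

theorem IsTruncSVD.eq_of_counterexample {X : Matrix (Fin 3) (Fin 3) ℝ}
    (hX : IsTruncSVD !![-1, 0, 10; 0, 2, 0; 10, 0, -100] X 1) :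
    X = !![-1, 0, 10; 0, 0, 0; 10, 0, -100] := by
  have hrank : (!![-1, 0, 10; 0, 0, 0; 10, 0, -100] : Matrix (Fin 3) (Fin 3) ℝ).rank ≤ 1 := by
    have : !![-1, 0, 10; 0, 0, 0; 10, 0, -100] = vecMulVec ![1, 0, -10] ![(-1 : ℝ), 0, 10] := by
      ext i j; fin_cases i <;> fin_cases j <;> norm_num [vecMulVec_apply]
    exact this ▸ rank_vecMulVec_le _ _
  have hdist := frobNorm_le_frobNorm_iff.mp (hX.2 _ hrank)
  simp [Fin.sum_univ_three, sq_abs] at hdist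
  norm_num at hdist
  -- On rows and columns `{1, 2}` the target is `diag(2, -100)`, which takes the whole budget `2²`.
  obtain ⟨h11, h12, h21, h22⟩ := eq_of_mul_eq_mul_of_dist_sq_le (a := 2) (b := -100)
    (by norm_num) (mul_eq_mul_of_rank_le_one hX.1 1 2 1 2)
    (by nlinarith [sq_nonneg (-1 - X 0 0), sq_nonneg (X 0 1), sq_nonneg (10 - X 0 2),
      sq_nonneg (X 1 0), sq_nonneg (10 - X 2 0)])
  rw [h11, h12, h21, h22] at hdist
  ext i j; fin_cases i <;> fin_cases j <;> simp [h11, h12, h21, h22] <;>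
    nlinarith [sq_nonneg (-1 - X 0 0), sq_nonneg (X 0 1), sq_nonneg (10 - X 0 2),
      sq_nonneg (X 1 0), sq_nonneg (10 - X 2 0)]

/-- Section 9 counterexample: truncating after forming the CUR approximation can be
strictly worse than truncating the middle matrix. -/
theorem truncation_order_counterexample
    (A : Matrix (Fin 3) (Fin 3) ℝ) (C : Matrix (Fin 3) (Fin 2) ℝ)
    (R : Matrix (Fin 2) (Fin 3) ℝ) (U : Matrix (Fin 2) (Fin 2) ℝ)
    (hA : A = !![(-1 : ℝ), 0, 10; 0, 2, 0; 10, 0, 100])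
    (hC : C = !![(-1 : ℝ), 0; 0, 2; 10, 0])
    (hR : R = !![(-1 : ℝ), 0, 10; 0, 2, 0])
    (hU : U = !![(-1 : ℝ), 0; 0, 2])
    (Up : Matrix (Fin 2) (Fin 2) ℝ) (hUp : IsMPInv U Up)
    (U1 : Matrix (Fin 2) (Fin 2) ℝ) (hU1 : IsTruncSVD U U1 1)
    (U1p : Matrix (Fin 2) (Fin 2) ℝ) (hU1p : IsMPInv U1 U1p)
    (CUR1 : Matrix (Fin 3) (Fin 3) ℝ) (hCUR1 : IsTruncSVD (C * Up * R) CUR1 1) :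
    specNorm (A - C * U1p * R) < specNorm (A - CUR1) ∧
    frobNorm (A - C * U1p * R) < frobNorm (A - CUR1) ∧
    frobNorm (A - C * U1p * R) = 101 ∧
    frobNorm (A - CUR1) = Real.sqrt 40004 ∧
    specNorm (A - C * U1p * R) ≤ 101 ∧
    specNorm (A - CUR1) = 200 := by
  have hU_diag : U = diagonal ![-1, 2] := by
    rw [hU]; ext i j; fin_cases i <;> fin_cases j <;> simp
  subst hA hC hR hU_diag
  obtain rfl := hUp.eq_diagonal_inv
  obtain rfl := hU1.eq_diagonal_two (by norm_num)
  obtain rfl := hU1p.eq_diagonal_inv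
  have hCUR : !![(-1 : ℝ), 0; 0, 2; 10, 0] * (diagonal fun i => (![-1, 2] i : ℝ)⁻¹) *
      !![(-1 : ℝ), 0, 10; 0, 2, 0] = !![-1, 0, 10; 0, 2, 0; 10, 0, -100] := by
    ext i j; fin_cases i <;> fin_cases j <;>
      norm_num [mul_apply, mul_diagonal, Fin.sum_univ_two, -cons_mul]
  obtain rfl := (hCUR ▸ hCUR1).eq_of_counterexample
  have hCU1R : !![(-1 : ℝ), 0, 10; 0, 2, 0; 10, 0, 100] - !![(-1 : ℝ), 0; 0, 2; 10, 0] *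
      (diagonal fun i => (![0, 2] i : ℝ)⁻¹) * !![(-1 : ℝ), 0, 10; 0, 2, 0] =
      !![-1, 0, 10; 0, 0, 0; 10, 0, 100] := by
    ext i j; fin_cases i <;> fin_cases j <;>
      norm_num [mul_apply, mul_diagonal, Fin.sum_univ_two, -cons_mul]
  have hCUR1 : !![(-1 : ℝ), 0, 10; 0, 2, 0; 10, 0, 100] - !![-1, 0, 10; 0, 0, 0; 10, 0, -100] =
      diagonal ![0, 2, 200] := by
    ext i j; fin_cases i <;> fin_cases j <;> norm_num
  have hfrob₁ : frobNorm !![(-1 : ℝ), 0, 10; 0, 0, 0; 10, 0, 100] = 101 := by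
    rw [frobNorm, Real.sqrt_eq_iff_mul_self_eq_of_pos (by norm_num)]
    simp [Fin.sum_univ_three]; norm_num
  have hfrob₂ : frobNorm (diagonal ![(0 : ℝ), 2, 200]) = Real.sqrt 40004 := by
    rw [frobNorm]; congr 1; simp [Fin.sum_univ_three, diagonal_apply]; norm_num
  have hspec₂ : specNorm (diagonal ![(0 : ℝ), 2, 200]) = 200 := by
    rw [specNorm_diagonal _ 2 (by simp [Fin.forall_fin_succ]; norm_num)]; simp
  have hspec₁ := (specNorm_le_frobNorm _).trans_eq hfrob₁
  rw [hCU1R, hCUR1, hfrob₁, hfrob₂, hspec₂]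
  refine ⟨by linarith, ?_, rfl, rfl, hspec₁, rfl⟩
  rw [show (101 : ℝ) = Real.sqrt (101 ^ 2) by simp]
  exact Real.sqrt_lt_sqrt (by positivity) (by norm_num)
end
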